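/- Let x_1, …, x_n ∈ ℝ^{2n} be linearly independent vectors spanning a Lagrangian subspace, i.e. x_iᵀ J x_j = 0 for all i, j. Let K := X_R X_L⁺ and Ĥ := K + Jᵀ Kᵀ J. Then for every real λ ≠ 0, λ is an eigenvalue of K Kᵀ if and only if λ is an eigenvalue of Ĥ Ĥᵀ. -/

import Mathlib

/-!
The Lagrangian condition gives `X_Lᵀ J X_R = 0`, hence `K J K = 0`. With `A := K Kᵀ`
and `B := Jᵀ (Kᵀ K) J` this makes `Ĥ Ĥᵀ = A + B` with `A B = B A = 0`. Whenever
`a b = b a = 0` and `μ ≠ 0`, `(μ - a)(μ - b) = (μ - b)(μ - a) = μ (μ - (a + b))`,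
so `μ ∈ σ(a + b) ↔ μ ∈ σ(a) ∨ μ ∈ σ(b)`. Finally `σ(B) = σ(Kᵀ K)` since `J` is
orthogonal, and `σ(Kᵀ K) \ {0} = σ(K Kᵀ) \ {0}`.
-/

open Matrix

noncomputable section

/-- The canonical skew-symmetric matrix `J = [[0, I],[-I, 0]]`. -/
def Jmat (n : ℕ) : Matrix (Fin n ⊕ Fin n) (Fin n ⊕ Fin n) ℝ :=
  Matrix.fromBlocks 0 1 (-1) 0

/-- A matrix `H` is skew-Hamiltonian if `Jᵀ Hᵀ J = H`. -/
def IsSkewHamiltonian {n : ℕ} (H : Matrix (Fin n ⊕ Fin n) (Fin n ⊕ Fin n) ℝ) : Prop :=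
  (Jmat n)ᵀ * Hᵀ * Jmat n = H

/-- `X_L = [x_1 ⋯ x_{n-1}]`. -/
def XL {n : ℕ} (x : Fin n → (Fin n ⊕ Fin n) → ℝ) :
    Matrix (Fin n ⊕ Fin n) (Fin (n - 1)) ℝ :=
  Matrix.of fun i j => x ⟨j.1, lt_of_lt_of_le j.2 (Nat.sub_le n 1)⟩ i

/-- `X_R = [x_2 ⋯ x_n]`. -/
def XR {n : ℕ} (x : Fin n → (Fin n ⊕ Fin n) → ℝ) :
    Matrix (Fin n ⊕ Fin n) (Fin (n - 1)) ℝ :=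
  Matrix.of fun i j => x ⟨j.1 + 1, by have := j.2; omega⟩ i

/-- The Moore–Penrose pseudoinverse `X_L⁺ = (X_Lᵀ X_L)⁻¹ X_Lᵀ` of `X_L`
(for `X_L` with linearly independent columns). -/
def XLpinv {n : ℕ} (x : Fin n → (Fin n ⊕ Fin n) → ℝ) :
    Matrix (Fin (n - 1)) (Fin n ⊕ Fin n) ℝ :=
  ((XL x)ᵀ * XL x)⁻¹ * (XL x)ᵀ

/-- `Ĥ = X_R X_L⁺ + Jᵀ (X_R X_L⁺)ᵀ J`. -/
def Hhat {n : ℕ} (x : Fin n → (Fin n ⊕ Fin n) → ℝ) :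
    Matrix (Fin n ⊕ Fin n) (Fin n ⊕ Fin n) ℝ :=
  XR x * XLpinv x + (Jmat n)ᵀ * (XR x * XLpinv x)ᵀ * Jmat n

/-- `H` realizes the Krylov relations `H x_k = x_{k+1}`, `k = 1, …, n-1`. -/
def KrylovRel {n : ℕ} (H : Matrix (Fin n ⊕ Fin n) (Fin n ⊕ Fin n) ℝ)
    (x : Fin n → (Fin n ⊕ Fin n) → ℝ) : Prop :=
  ∀ k : Fin (n - 1), H *ᵥ x ⟨k.1, lt_of_lt_of_le k.2 (Nat.sub_le n 1)⟩
    = x ⟨k.1 + 1, by have := k.2; omega⟩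

theorem spectrum.mem_add_iff_of_mul_eq_zero {𝕜 A : Type*} [Field 𝕜] [Ring A] [Algebra 𝕜 A]
    {a b : A} (hab : a * b = 0) (hba : b * a = 0) {μ : 𝕜} (hμ : μ ≠ 0) :
    μ ∈ spectrum 𝕜 (a + b) ↔ μ ∈ spectrum 𝕜 a ∨ μ ∈ spectrum 𝕜 b := by
  simp only [spectrum.mem_iff, ← not_and_or, not_iff_not]
  set u := algebraMap 𝕜 A μ
  have hu : IsUnit u := hμ.isUnit.map _
  have hprod : (u - a) * (u - b) = u * (u - (a + b)) := by
    simp only [sub_mul, mul_sub, mul_add, hab, ← Algebra.commutes μ a, u]; abel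
  have hprod' : (u - b) * (u - a) = u * (u - (a + b)) := by
    simp only [sub_mul, mul_sub, mul_add, hba, ← Algebra.commutes μ b, u]; abel
  have hcomm : Commute (u - a) (u - b) := hprod.trans hprod'.symm
  rw [← hcomm.isUnit_mul_iff, hprod, hu.mul_left_iff]

namespace Matrix

variable {m 𝕜 : Type*} [Fintype m] [DecidableEq m] [Field 𝕜]

theorem mem_spectrum_iff_exists_mulVec_eq_smul {A : Matrix m m 𝕜} {μ : 𝕜} :
    μ ∈ spectrum 𝕜 A ↔ ∃ z, z ≠ 0 ∧ A *ᵥ z = μ • z := by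
  rw [spectrum.mem_iff, isUnit_iff_isUnit_det, isUnit_iff_ne_zero, not_not,
    ← exists_mulVec_eq_zero_iff]
  simp only [Algebra.algebraMap_eq_smul_one, sub_mulVec, smul_mulVec, one_mulVec,
    sub_eq_zero, eq_comm]

variable {K J : Matrix m m 𝕜}

theorem add_conj_transpose_mul_transpose (hJ : Jᵀ = -J) (hJJ : J * Jᵀ = 1)
    (hKJK : K * J * K = 0) :
    (K + Jᵀ * Kᵀ * J) * (K + Jᵀ * Kᵀ * J)ᵀ = K * Kᵀ + Jᵀ * (Kᵀ * K) * J := by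
  have hJ2 : J * J = -1 := by rw [← neg_eq_iff_eq_neg, ← mul_neg, ← hJ, hJJ]
  have hKtJKt : Kᵀ * J * Kᵀ = 0 := by
    simpa [transpose_mul, hJ, Matrix.mul_assoc] using congrArg transpose hKJK
  simp only [transpose_add, transpose_mul, transpose_transpose]
  rw [hJ]
  calc _ = K * Kᵀ - K * J * K * J - J * (Kᵀ * J * Kᵀ) + J * Kᵀ * (J * J) * K * J := by
        noncomm_ring
    _ = K * Kᵀ + -J * (Kᵀ * K) * J := by rw [hKJK, hKtJKt, hJ2]; noncomm_ring

theorem mul_transpose_self_mul_conj_eq_zero (hKJK : K * J * K = 0) :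
    K * Kᵀ * (Jᵀ * (Kᵀ * K) * J) = 0 := by
  have hKtJKt : Kᵀ * Jᵀ * Kᵀ = 0 := by
    simpa [transpose_mul, Matrix.mul_assoc] using congrArg transpose hKJK
  calc _ = K * (Kᵀ * Jᵀ * Kᵀ) * K * J := by noncomm_ring
    _ = 0 := by rw [hKtJKt]; noncomm_ring

theorem conj_mul_mul_transpose_self_eq_zero (hKJK : K * J * K = 0) :
    Jᵀ * (Kᵀ * K) * J * (K * Kᵀ) = 0 := by
  calc _ = Jᵀ * Kᵀ * (K * J * K) * Kᵀ := by noncomm_ring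
    _ = 0 := by rw [hKJK]; noncomm_ring

theorem spectrum_transpose_mul_mul (hJJ : J * Jᵀ = 1) (A : Matrix m m 𝕜) :
    spectrum 𝕜 (Jᵀ * A * J) = spectrum 𝕜 A :=
  spectrum.units_conjugate' (u := ⟨J, Jᵀ, hJJ, mul_eq_one_comm.mp hJJ⟩)

theorem mem_spectrum_add_conj_mul_transpose_iff (hJ : Jᵀ = -J) (hJJ : J * Jᵀ = 1)
    (hKJK : K * J * K = 0) {μ : 𝕜} (hμ : μ ≠ 0) :
    μ ∈ spectrum 𝕜 ((K + Jᵀ * Kᵀ * J) * (K + Jᵀ * Kᵀ * J)ᵀ) ↔ μ ∈ spectrum 𝕜 (K * Kᵀ) := by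
  rw [add_conj_transpose_mul_transpose hJ hJJ hKJK,
    spectrum.mem_add_iff_of_mul_eq_zero (mul_transpose_self_mul_conj_eq_zero hKJK)
      (conj_mul_mul_transpose_self_eq_zero hKJK) hμ,
    spectrum_transpose_mul_mul hJJ, or_iff_left_of_imp]
  exact (spectrum.unit_mem_mul_comm (r := Units.mk0 μ hμ)).mp

end Matrix

theorem Jmat_transpose (n : ℕ) : (Jmat n)ᵀ = -Jmat n := by
  simp [Jmat, fromBlocks_transpose, fromBlocks_neg]

theorem Jmat_mul_Jmat_transpose (n : ℕ) : Jmat n * (Jmat n)ᵀ = 1 := by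
  rw [Jmat_transpose]
  simp [Jmat, fromBlocks_multiply, fromBlocks_neg, ← fromBlocks_one]

theorem XL_transpose_mul_Jmat_mul_XR {n : ℕ} {x : Fin n → (Fin n ⊕ Fin n) → ℝ}
    (hLag : ∀ i j : Fin n, x i ⬝ᵥ (Jmat n *ᵥ x j) = 0) :
    (XL x)ᵀ * Jmat n * XR x = 0 := by
  ext k l
  rw [Matrix.mul_assoc]
  simpa [Matrix.mul_apply, XL, XR, dotProduct, Matrix.mulVec, Finset.mul_sum] using hLag _ _

theorem XR_mul_XLpinv_mul_Jmat_mul_self {n : ℕ} {x : Fin n → (Fin n ⊕ Fin n) → ℝ}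
    (hLag : ∀ i j : Fin n, x i ⬝ᵥ (Jmat n *ᵥ x j) = 0) :
    XR x * XLpinv x * Jmat n * (XR x * XLpinv x) = 0 := by
  calc _ = XR x * (((XL x)ᵀ * XL x)⁻¹ * ((XL x)ᵀ * Jmat n * XR x)) * XLpinv x := by
        simp only [XLpinv, Matrix.mul_assoc]
    _ = 0 := by rw [XL_transpose_mul_Jmat_mul_XR hLag]; simp

theorem eigenvalues_KKT_eq_HHT_general {n : ℕ} (x : Fin n → (Fin n ⊕ Fin n) → ℝ)
    (hLag : ∀ i j : Fin n, x i ⬝ᵥ (Jmat n *ᵥ x j) = 0)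
    (lam : ℝ) (hlam : lam ≠ 0) :
    (∃ z : (Fin n ⊕ Fin n) → ℝ, z ≠ 0 ∧
        (XR x * XLpinv x * (XR x * XLpinv x)ᵀ) *ᵥ z = lam • z) ↔
    (∃ z : (Fin n ⊕ Fin n) → ℝ, z ≠ 0 ∧ (Hhat x * (Hhat x)ᵀ) *ᵥ z = lam • z) := by
  simp only [← mem_spectrum_iff_exists_mulVec_eq_smul, Hhat]
  exact (mem_spectrum_add_conj_mul_transpose_iff (Jmat_transpose n) (Jmat_mul_Jmat_transpose n)
    (XR_mul_XLpinv_mul_Jmat_mul_self hLag) hlam).symm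

/-- For a basis of a Lagrangian subspace, `K = X_R X_L⁺` and `Ĥ = K + Jᵀ Kᵀ J`, the
nonzero real eigenvalues of `K Kᵀ` and of `Ĥ Ĥᵀ` coincide. -/
theorem eigenvalues_KKT_eq_HHT {n : ℕ} (x : Fin n → (Fin n ⊕ Fin n) → ℝ)
    (hLI : LinearIndependent ℝ x)
    (hLag : ∀ i j : Fin n, x i ⬝ᵥ (Jmat n *ᵥ x j) = 0)
    (lam : ℝ) (hlam : lam ≠ 0) :
    (∃ z : (Fin n ⊕ Fin n) → ℝ, z ≠ 0 ∧
        (XR x * XLpinv x * (XR x * XLpinv x)ᵀ) *ᵥ z = lam • z) ↔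
    (∃ z : (Fin n ⊕ Fin n) → ℝ, z ≠ 0 ∧ (Hhat x * (Hhat x)ᵀ) *ᵥ z = lam • z) :=
  eigenvalues_KKT_eq_HHT_general x hLag lam hlam
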